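/- Let p > 2 be a real number. Then there exist constants 0 < λ ≤ Λ, depending only on p, such that for all real numbers a, b ≥ 0 one has λ·(a^p + b^(p−2)·a²) ≤ (a² + b²)^(p/2) − b^p ≤ Λ·(a^p + b^(p−2)·a²). -/

import Mathlib

/-!
Put `s = a²`, `t = b²`, `q = p / 2 ≥ 1`, so the middle term is `(s + t)^q - t^q`. Since `x ↦ x^q`
is convex on `[0, ∞)`, it lies above its tangent lines (Bernoulli's inequality). The tangent at `t`
gives `(s + t)^q - t^q ≥ q t^(q-1) s ≥ t^(q-1) s`, and superadditivity gives `(s + t)^q - t^q ≥ s^q`;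
averaging yields the lower bound with `λ = 1/2`. The tangent at `s + t` gives
`(s + t)^q - t^q ≤ q s (s + t)^(q-1)`, and `(s + t)^(q-1) ≤ 2^(q-1) (s^(q-1) + t^(q-1))` yields the
upper bound with `Λ = q 2^(q-1)`.
-/

namespace Real

lemma rpow_add_mul_rpow_sub_one_mul_sub_le_rpow {x y q : ℝ} (hx : 0 ≤ x) (hy : 0 ≤ y)
    (hq : 1 ≤ q) : x ^ q + q * x ^ (q - 1) * (y - x) ≤ y ^ q := by
  rcases hx.eq_or_lt with rfl | hx
  · rcases hq.eq_or_lt with rfl | hq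
    · simp
    · rw [zero_rpow (by linarith), zero_rpow (by linarith)]
      simpa using rpow_nonneg hy q
  have hbernoulli := one_add_mul_self_le_rpow_one_add (s := y / x - 1)
    (by linarith [div_nonneg hy hx.le]) hq
  rw [add_sub_cancel, div_rpow hy hx.le, le_div_iff₀ (rpow_pos_of_pos hx q)] at hbernoulli
  have hxq : x ^ q = x ^ (q - 1) * x := by rw [← rpow_add_one hx.ne']; ring_nf
  calc x ^ q + q * x ^ (q - 1) * (y - x) = (1 + q * (y / x - 1)) * x ^ q := by
        rw [hxq]; field_simp
    _ ≤ y ^ q := hbernoulli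

lemma add_rpow_le_two_rpow_mul_rpow_add_rpow {x y r : ℝ} (hx : 0 ≤ x) (hy : 0 ≤ y) (hr : 0 ≤ r) :
    (x + y) ^ r ≤ 2 ^ r * (x ^ r + y ^ r) := calc
  (x + y) ^ r ≤ (2 * max x y) ^ r := by
    rw [two_mul]; gcongr; exacts [le_max_left x y, le_max_right x y]
  _ = 2 ^ r * max (x ^ r) (y ^ r) := by
    rw [mul_rpow zero_le_two (le_max_of_le_left hx), rpow_max hx hy hr]
  _ ≤ 2 ^ r * (x ^ r + y ^ r) := by
    gcongr; exact max_le_add_of_nonneg (rpow_nonneg hx r) (rpow_nonneg hy r)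

lemma sq_rpow_div_two {x : ℝ} (hx : 0 ≤ x) (r : ℝ) : (x ^ 2) ^ (r / 2) = x ^ r := by
  rw [← rpow_natCast_mul hx]; congr 1; push_cast; ring

end Real

open Real

section

variable {s t q : ℝ}

lemma one_half_mul_le_add_rpow_sub_rpow (hs : 0 ≤ s) (ht : 0 ≤ t) (hq : 1 ≤ q) :
    1 / 2 * (s ^ q + t ^ (q - 1) * s) ≤ (s + t) ^ q - t ^ q := by
  have hsuper : s ^ q + t ^ q ≤ (s + t) ^ q := add_rpow_le_rpow_add hs ht hq
  have htangent := rpow_add_mul_rpow_sub_one_mul_sub_le_rpow ht (add_nonneg hs ht) hq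
  have hq_mul : t ^ (q - 1) * s ≤ q * t ^ (q - 1) * s := by
    rw [mul_assoc]
    exact le_mul_of_one_le_left (by positivity) hq
  rw [add_sub_cancel_right] at htangent
  linarith

lemma add_rpow_sub_rpow_le (hs : 0 ≤ s) (ht : 0 ≤ t) (hq : 1 ≤ q) :
    (s + t) ^ q - t ^ q ≤ q * 2 ^ (q - 1) * (s ^ q + t ^ (q - 1) * s) := by
  have htangent := rpow_add_mul_rpow_sub_one_mul_sub_le_rpow (add_nonneg hs ht) ht hq
  have hpow := add_rpow_le_two_rpow_mul_rpow_add_rpow hs ht (sub_nonneg.2 hq)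
  have hsq : s ^ q = s ^ (q - 1) * s := by
    rw [← rpow_add_one' hs (by linarith)]; ring_nf
  calc (s + t) ^ q - t ^ q ≤ q * s * (s + t) ^ (q - 1) := by linarith
    _ ≤ q * s * (2 ^ (q - 1) * (s ^ (q - 1) + t ^ (q - 1))) := by gcongr
    _ = q * 2 ^ (q - 1) * (s ^ q + t ^ (q - 1) * s) := by rw [hsq]; ring

end

/-- Two-sided growth estimate for the `p`-Laplacian difference, `p > 2`: there are
`0 < λ ≤ Λ` depending only on `p` such that for all `a, b ≥ 0`,
`λ (a^p + b^(p-2) a²) ≤ (a² + b²)^(p/2) - b^p ≤ Λ (a^p + b^(p-2) a²)`. -/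
theorem stmt18 (p : ℝ) (hp : 2 < p) :
    ∃ lam Lam : ℝ, 0 < lam ∧ lam ≤ Lam ∧
      ∀ a b : ℝ, 0 ≤ a → 0 ≤ b →
        lam * (a ^ p + b ^ (p - 2) * a ^ 2) ≤ (a ^ 2 + b ^ 2) ^ (p / 2) - b ^ p ∧
        (a ^ 2 + b ^ 2) ^ (p / 2) - b ^ p ≤ Lam * (a ^ p + b ^ (p - 2) * a ^ 2) := by
  have hq : 1 ≤ p / 2 := by linarith
  refine ⟨1 / 2, p / 2 * 2 ^ (p / 2 - 1), by norm_num, ?_, fun a b ha hb => ?_⟩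
  · calc (1 : ℝ) / 2 ≤ p / 2 := by linarith
      _ ≤ p / 2 * 2 ^ (p / 2 - 1) :=
        le_mul_of_one_le_right (by linarith) (one_le_rpow one_le_two (by linarith))
  have hlower := one_half_mul_le_add_rpow_sub_rpow (sq_nonneg a) (sq_nonneg b) hq
  have hupper := add_rpow_sub_rpow_le (sq_nonneg a) (sq_nonneg b) hq
  have hb_pow : (b ^ 2) ^ (p / 2 - 1) = b ^ (p - 2) := by
    rw [show p / 2 - 1 = (p - 2) / 2 by ring, sq_rpow_div_two hb]
  rw [sq_rpow_div_two ha, sq_rpow_div_two hb, hb_pow] at hlower hupper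
  exact ⟨hlower, hupper⟩
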